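/- If u is a radiating solution of the Helmholtz equation Δu + κ²u = 0 in |x| > R' with Fourier coefficients û_n^m(r) on spheres of radius r, then û_n^m(R) = (h_n^{(1)}(κR)/h_n^{(1)}(κR')) û_n^m(R') for R > R', and |û_n^m(R)| ≤ C(R'/R)^n |û_n^m(R')| with C independent of n and m. -/

import Mathlib

open Real MeasureTheory intervalIntegral Filter Topology

/-- The Bessel function of the first kind, defined by its power series
(`t^ν` interpreted via `Real.rpow`, valid for `t > 0`). -/
noncomputable def besselJ (ν : ℝ) (t : ℝ) : ℝ :=
  ∑' k : ℕ, ((-1 : ℝ) ^ k / (k.factorial * Real.Gamma (k + ν + 1))) *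
    (t / 2) ^ (2 * (k : ℝ) + ν)

/-- The spherical Bessel function of the first kind `j_n(t) = √(π/(2t)) J_{n+1/2}(t)`. -/
noncomputable def sphJ (n : ℕ) (t : ℝ) : ℝ :=
  Real.sqrt (Real.pi / (2 * t)) * besselJ ((n : ℝ) + 1 / 2) t

/-- The spherical Bessel function of the second kind
`y_n(t) = √(π/(2t)) Y_{n+1/2}(t) = (-1)^{n+1} √(π/(2t)) J_{-(n+1/2)}(t)`. -/
noncomputable def sphY (n : ℕ) (t : ℝ) : ℝ :=
  (-1 : ℝ) ^ (n + 1) * Real.sqrt (Real.pi / (2 * t)) * besselJ (-((n : ℝ) + 1 / 2)) t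

/-- The spherical Hankel function of the first kind `h_n^{(1)} = j_n + i y_n`. -/
noncomputable def sphH1 (n : ℕ) (t : ℝ) : ℂ := (sphJ n t : ℂ) + Complex.I * (sphY n t : ℂ)

/-- The spherical Hankel function of the second kind `h_n^{(2)} = j_n - i y_n`. -/
noncomputable def sphH2 (n : ℕ) (t : ℝ) : ℂ := (sphJ n t : ℂ) - Complex.I * (sphY n t : ℂ)

/-!
For `t > 0` the defining series give `j_n(t) = (√π/2) (t/2)^n S_{n+1/2}((t/2)²)` and
`y_n(t) = ± √π / (t (t/2)^n) S_{-(n+1/2)}((t/2)²)`,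
where `S_ν(q) = Σ_k (-1)^k q^k / (k! Γ(k+ν+1))`.
By the reflection formula the constant term of `S_{-(n+1/2)}` has modulus `Γ(n+1/2)/π`, and
since `|Γ(x+1)| ≥ |Γ(x)|/2` at half-integers the remaining terms are `O(e^{t²/2}/n)` relative
to it. Together with `n!² ≤ Γ(n+1/2) Γ(n+3/2)` (log-convexity), which makes `j_n` negligible,
this shows that for large `n` the modulus `|h_n^{(1)}(t)|` is comparable, uniformly in `n`, to
`Γ(n+1/2) / (√π t (t/2)^n)`. The ratio of the latter at `s = κR` and `t = κR'` is
`(t/s)^{n+1}`, and the finitely many small `n` are absorbed into the constant.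
-/

open scoped Nat

lemma one_half_le_abs_intCast_add_half (m : ℤ) : (1 / 2 : ℝ) ≤ |(m : ℝ) + 1 / 2| := by
  rcases le_or_gt 0 m with hm | hm
  · have : (0 : ℝ) ≤ m := by exact_mod_cast hm
    rw [abs_of_pos (by linarith)]; linarith
  · have : (m : ℝ) ≤ -1 := by exact_mod_cast Int.le_sub_one_of_lt hm
    rw [abs_of_neg (by linarith)]; linarith

lemma pow_mul_abs_Gamma_le_abs_Gamma_add_nat {x c : ℝ} (hc : 0 < c)
    (hx : ∀ j : ℕ, c ≤ |x + j|) (k : ℕ) : c ^ k * |Gamma x| ≤ |Gamma (x + k)| := by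
  induction k with
  | zero => simp
  | succ k ih =>
    have hxk : x + k ≠ 0 := fun h => by have := hx k; rw [h, abs_zero] at this; linarith
    rw [Nat.cast_succ, ← add_assoc, Real.Gamma_add_one hxk, abs_mul, pow_succ']
    calc c * c ^ k * |Gamma x| = c * (c ^ k * |Gamma x|) := by ring
      _ ≤ |x + k| * |Gamma (x + k)| := by gcongr; exact hx k

lemma abs_Gamma_half_sub_nat (n : ℕ) :
    |Gamma (1 / 2 - n)| = π / Gamma (n + 1 / 2) := by
  have hsin : Real.sin (π * (1 / 2 - n)) = (-1) ^ n := by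
    rw [show π * (1 / 2 - n) = π / 2 - n * π by ring, Real.sin_sub_nat_mul_pi,
      Real.sin_pi_div_two, mul_one]
  have hrefl := Real.Gamma_mul_Gamma_one_sub (1 / 2 - n)
  rw [hsin, show 1 - (1 / 2 - n : ℝ) = n + 1 / 2 by ring] at hrefl
  have hpos : 0 < Gamma (n + 1 / 2) := Real.Gamma_pos_of_pos (by positivity)
  rw [eq_div_iff hpos.ne', ← abs_of_pos hpos, ← abs_mul, hrefl, abs_div, abs_pow, abs_neg,
    abs_one, one_pow, div_one, abs_of_pos Real.pi_pos]

lemma factorial_sq_le_Gamma_mul_Gamma (n : ℕ) :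
    ((n ! : ℝ)) ^ 2 ≤ Gamma (n + 1 / 2) * Gamma (n + 3 / 2) := by
  have hconv := Real.Gamma_mul_add_mul_le_rpow_Gamma_mul_rpow_Gamma
    (s := n + 1 / 2) (t := n + 3 / 2) (a := 1 / 2) (b := 1 / 2)
    (by positivity) (by positivity) (by norm_num) (by norm_num) (by norm_num)
  rw [show (1 / 2 : ℝ) * (n + 1 / 2) + 1 / 2 * (n + 3 / 2) = n + 1 by ring,
    Real.Gamma_nat_eq_factorial, ← Real.mul_rpow (Real.Gamma_pos_of_pos (by positivity)).le
      (Real.Gamma_pos_of_pos (by positivity)).le, ← Real.sqrt_eq_rpow] at hconv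
  calc ((n ! : ℝ)) ^ 2 ≤ (√(Gamma (n + 1 / 2) * Gamma (n + 3 / 2))) ^ 2 := by
        gcongr
    _ = _ := Real.sq_sqrt (by positivity)

lemma Real.hasSum_pow_div_factorial (x : ℝ) : HasSum (fun k : ℕ => x ^ k / k !) (Real.exp x) :=
  Real.exp_eq_exp_ℝ ▸ NormedSpace.expSeries_div_hasSum_exp x

noncomputable def besselCoeff (ν : ℝ) (k : ℕ) : ℝ :=
  (-1) ^ k / (k ! * Gamma (k + ν + 1))

noncomputable def besselSeries (ν q : ℝ) : ℝ := ∑' k : ℕ, besselCoeff ν k * q ^ k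

lemma besselJ_eq_rpow_mul_besselSeries (ν : ℝ) {t : ℝ} (ht : 0 < t) :
    besselJ ν t = (t / 2) ^ ν * besselSeries ν ((t / 2) ^ 2) := by
  rw [besselJ, besselSeries, ← tsum_mul_left]
  congr 1 with k
  rw [Real.rpow_add (by positivity), Real.rpow_mul (by positivity), Real.rpow_natCast,
    Real.rpow_two, besselCoeff]
  ring

lemma besselCoeff_zero (ν : ℝ) : besselCoeff ν 0 = (Gamma (ν + 1))⁻¹ := by
  simp [besselCoeff]

lemma abs_besselCoeff_le {ν : ℝ} (hν : 0 ≤ ν) (k : ℕ) :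
    |besselCoeff ν k| ≤ 1 / (k ! * Gamma (ν + 1)) := by
  have hmono := pow_mul_abs_Gamma_le_abs_Gamma_add_nat (x := ν + 1) one_pos
    (fun j => by rw [abs_of_pos (by positivity)]; linarith [j.cast_nonneg (α := ℝ)]) k
  rw [one_pow, one_mul, abs_of_pos (Real.Gamma_pos_of_pos (by positivity)),
    abs_of_pos (Real.Gamma_pos_of_pos (by positivity))] at hmono
  rw [besselCoeff, abs_div, abs_pow, abs_neg, abs_one, one_pow, abs_mul, Nat.abs_cast,
    abs_of_pos (Real.Gamma_pos_of_pos (by positivity)),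
    show (k : ℝ) + ν + 1 = ν + 1 + k by ring]
  gcongr

lemma abs_besselCoeff_neg_succ_le {n : ℕ} (hn : 1 ≤ n) (k : ℕ) :
    |besselCoeff (-(n + 1 / 2)) (k + 1)| ≤
      Gamma (n + 1 / 2) / (π * (2 * n - 1)) * (2 ^ (k + 1) / (k + 1) !) := by
  have hn' : (1 : ℝ) ≤ n := by exact_mod_cast hn
  have hhalf : (1 / 2 : ℝ) - n ≠ 0 := by linarith
  have hGamma : |Gamma (3 / 2 - n)| = (2 * n - 1) / 2 * (π / Gamma (n + 1 / 2)) := by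
    rw [show (3 / 2 : ℝ) - n = 1 / 2 - n + 1 by ring, Real.Gamma_add_one hhalf, abs_mul,
      abs_Gamma_half_sub_nat, abs_of_neg (by linarith)]
    ring
  have hgrowth := pow_mul_abs_Gamma_le_abs_Gamma_add_nat (x := 3 / 2 - n) (c := 1 / 2)
    (by norm_num) (fun j => by
      have := one_half_le_abs_intCast_add_half ((j : ℤ) + 1 - n)
      push_cast at this
      convert this using 2
      ring) k
  rw [hGamma, one_div_pow] at hgrowth
  have hpos : 0 < Gamma (n + 1 / 2) := Real.Gamma_pos_of_pos (by positivity)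
  have hlow : 0 < 1 / 2 ^ k * ((2 * n - 1) / 2 * (π / Gamma (n + 1 / 2))) :=
    mul_pos (by positivity) (mul_pos (by linarith) (div_pos Real.pi_pos hpos))
  rw [besselCoeff, abs_div, abs_pow, abs_neg, abs_one, one_pow, abs_mul, Nat.abs_cast,
    show ((k + 1 : ℕ) : ℝ) + -(n + 1 / 2) + 1 = 3 / 2 - n + k by push_cast; ring]
  calc 1 / ((k + 1) ! * |Gamma (3 / 2 - n + k)|)
      ≤ 1 / ((k + 1) ! * (1 / 2 ^ k * ((2 * n - 1) / 2 * (π / Gamma (n + 1 / 2))))) := by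
        gcongr
    _ = _ := by
        field_simp
        ring

lemma abs_besselSeries_le {ν : ℝ} (hν : 0 ≤ ν) (q : ℝ) :
    |besselSeries ν q| ≤ Real.exp |q| / Gamma (ν + 1) := by
  rw [← Real.norm_eq_abs]
  refine tsum_of_norm_bounded ((Real.hasSum_pow_div_factorial |q|).div_const _) fun k => ?_
  rw [Real.norm_eq_abs, abs_mul, abs_pow]
  calc |besselCoeff ν k| * |q| ^ k ≤ 1 / (k ! * Gamma (ν + 1)) * |q| ^ k := by
        gcongr
        exact abs_besselCoeff_le hν k
    _ = |q| ^ k / k ! / Gamma (ν + 1) := by ring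

lemma abs_besselSeries_neg_sub_le {n : ℕ} (hn : 1 ≤ n) (q : ℝ) :
    |besselSeries (-(n + 1 / 2)) q - (Gamma (1 / 2 - n))⁻¹| ≤
      Gamma (n + 1 / 2) / (π * (2 * n - 1)) * (Real.exp (2 * |q|) - 1) := by
  set B := Gamma (n + 1 / 2) / (π * (2 * n - 1))
  have htail : HasSum (fun k : ℕ => B * ((2 * |q|) ^ (k + 1) / (k + 1) !))
      (B * (Real.exp (2 * |q|) - 1)) := by
    have := (hasSum_nat_add_iff' 1).mpr (Real.hasSum_pow_div_factorial (2 * |q|))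
    simpa using this.mul_left B
  have hbound : ∀ k : ℕ, ‖besselCoeff (-(n + 1 / 2)) (k + 1) * q ^ (k + 1)‖ ≤
      B * ((2 * |q|) ^ (k + 1) / (k + 1) !) := by
    intro k
    rw [Real.norm_eq_abs, abs_mul, abs_pow, mul_pow]
    calc _ ≤ B * (2 ^ (k + 1) / (k + 1) !) * |q| ^ (k + 1) := by
          gcongr
          exact abs_besselCoeff_neg_succ_le hn k
      _ = _ := by ring
  have hsummable : Summable fun k => besselCoeff (-(n + 1 / 2)) k * q ^ k :=
    (summable_nat_add_iff 1).mp (Summable.of_norm_bounded htail.summable hbound)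
  rw [besselSeries, hsummable.tsum_eq_zero_add, besselCoeff_zero, pow_zero, mul_one,
    show -(n + 1 / 2) + 1 = 1 / 2 - (n : ℝ) by ring, add_sub_cancel_left, ← Real.norm_eq_abs]
  exact tsum_of_norm_bounded htail hbound

lemma pow_le_Gamma_mul_Gamma_mul_exp {q : ℝ} (hq : 0 ≤ q) (n : ℕ) :
    q ^ n ≤ Gamma (n + 1 / 2) * Gamma (n + 3 / 2) * Real.exp q := by
  have hfact : (1 : ℝ) ≤ n ! := by exact_mod_cast Nat.one_le_iff_ne_zero.mpr n.factorial_ne_zero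
  calc q ^ n ≤ n ! * Real.exp q := by
        rw [← div_le_iff₀' (by positivity)]; exact Real.pow_div_factorial_le_exp q hq n
    _ ≤ (n ! : ℝ) ^ 2 * Real.exp q := by gcongr; nlinarith
    _ ≤ _ := by gcongr; exact factorial_sq_le_Gamma_mul_Gamma n

lemma rpow_natCast_add_half {a : ℝ} (ha : 0 ≤ a) (n : ℕ) :
    a ^ ((n : ℝ) + 1 / 2) = a ^ n * √a := by
  rw [Real.sqrt_eq_rpow, ← Real.rpow_natCast, ← Real.rpow_add' ha (by positivity)]

lemma sqrt_pi_div_two_mul_eq_div {t : ℝ} (ht : 0 < t) :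
    √(π / (2 * t)) = √π / (2 * √(t / 2)) := by
  rw [← Real.sqrt_sq (by positivity : 0 ≤ 2 * √(t / 2)), ← Real.sqrt_div Real.pi_pos.le,
    mul_pow, Real.sq_sqrt (by positivity)]
  ring_nf

lemma sphJ_eq_mul_besselSeries {t : ℝ} (ht : 0 < t) (n : ℕ) :
    sphJ n t = √π / 2 * (t / 2) ^ n * besselSeries (n + 1 / 2) ((t / 2) ^ 2) := by
  rw [sphJ, besselJ_eq_rpow_mul_besselSeries _ ht, rpow_natCast_add_half (by positivity),
    sqrt_pi_div_two_mul_eq_div ht]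
  field_simp

lemma sphY_eq_mul_besselSeries {t : ℝ} (ht : 0 < t) (n : ℕ) :
    sphY n t = (-1) ^ (n + 1) * (√π / (t * (t / 2) ^ n)) *
      besselSeries (-(n + 1 / 2)) ((t / 2) ^ 2) := by
  rw [sphY, besselJ_eq_rpow_mul_besselSeries _ ht, Real.rpow_neg (by positivity),
    rpow_natCast_add_half (by positivity), sqrt_pi_div_two_mul_eq_div ht]
  field_simp
  rw [Real.sq_sqrt (by positivity)]
  ring

/-- The leading-order size of `|y_n(t)|` as `n → ∞`. -/
noncomputable def sphYScale (n : ℕ) (t : ℝ) : ℝ :=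
  √π / (t * (t / 2) ^ n) * (Gamma (n + 1 / 2) / π)

lemma sphYScale_pos {t : ℝ} (ht : 0 < t) (n : ℕ) : 0 < sphYScale n t := by
  have := Real.Gamma_pos_of_pos (by positivity : (0 : ℝ) < n + 1 / 2)
  have := Real.pi_pos
  unfold sphYScale
  positivity

lemma sphYScale_eq_pow_mul {t s : ℝ} (ht : 0 < t) (hs : 0 < s) (n : ℕ) :
    sphYScale n s = (t / s) ^ (n + 1) * sphYScale n t := by
  unfold sphYScale
  simp only [div_pow]
  field_simp
  ring

lemma abs_sphJ_le {t : ℝ} (ht : 0 < t) (n : ℕ) :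
    |sphJ n t| ≤ π / 2 * t * Real.exp (t ^ 2 / 2) * sphYScale n t := by
  set q := (t / 2) ^ 2 with hq
  have hexp : Real.exp (t ^ 2 / 2) = Real.exp q * Real.exp q := by
    rw [← Real.exp_add, hq]; ring_nf
  have hseries := abs_besselSeries_le (by positivity : (0 : ℝ) ≤ n + 1 / 2) q
  rw [abs_of_nonneg (by positivity : (0 : ℝ) ≤ q),
    show (n : ℝ) + 1 / 2 + 1 = n + 3 / 2 by ring] at hseries
  have hpow : (t / 2) ^ n * (t / 2) ^ n ≤ Gamma (n + 1 / 2) * Gamma (n + 3 / 2) *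
      Real.exp q := by
    rw [← mul_pow, ← sq]; exact pow_le_Gamma_mul_Gamma_mul_exp (by positivity) n
  rw [sphJ_eq_mul_besselSeries ht, abs_mul, abs_of_nonneg (by positivity)]
  calc √π / 2 * (t / 2) ^ n * |besselSeries (n + 1 / 2) q|
      ≤ √π / 2 * (t / 2) ^ n * (Real.exp q / Gamma (n + 3 / 2)) := by gcongr
    _ ≤ _ := by
      rw [hexp, sphYScale, ← sub_nonneg]
      have key : 0 ≤ √π / 2 * Real.exp q / ((t / 2) ^ n * Gamma (n + 3 / 2)) *
          (Gamma (n + 1 / 2) * Gamma (n + 3 / 2) * Real.exp q -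
            (t / 2) ^ n * (t / 2) ^ n) := by
        have := sub_nonneg.mpr hpow
        positivity
      convert key using 1
      field_simp

lemma abs_abs_sphY_sub_sphYScale_le {n : ℕ} (hn : 1 ≤ n) {t : ℝ} (ht : 0 < t) :
    |(|sphY n t| - sphYScale n t)| ≤
      sphYScale n t * ((Real.exp (t ^ 2 / 2) - 1) / (2 * n - 1)) := by
  have hscale : sphYScale n t =
      √π / (t * (t / 2) ^ n) * |(Gamma (1 / 2 - n))⁻¹| := by
    rw [sphYScale, abs_inv, abs_Gamma_half_sub_nat, inv_div]
  have hseries := abs_besselSeries_neg_sub_le hn ((t / 2) ^ 2)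
  rw [abs_of_nonneg (by positivity : (0 : ℝ) ≤ (t / 2) ^ 2),
    show 2 * (t / 2) ^ 2 = t ^ 2 / 2 by ring] at hseries
  rw [sphY_eq_mul_besselSeries ht, abs_mul, abs_mul, abs_pow, abs_neg, abs_one, one_pow, one_mul,
    abs_of_pos (by positivity : 0 < √π / (t * (t / 2) ^ n)), hscale, ← mul_sub, abs_mul,
    abs_of_pos (by positivity : 0 < √π / (t * (t / 2) ^ n))]
  calc _ ≤ √π / (t * (t / 2) ^ n) *
        |besselSeries (-(n + 1 / 2)) ((t / 2) ^ 2) - (Gamma (1 / 2 - n))⁻¹| :=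
        mul_le_mul_of_nonneg_left (abs_abs_sub_abs_le_abs_sub _ _) (by positivity)
    _ ≤ √π / (t * (t / 2) ^ n) *
        (Gamma (n + 1 / 2) / (π * (2 * n - 1)) * (Real.exp (t ^ 2 / 2) - 1)) := by gcongr
    _ = _ := by
      rw [abs_inv, abs_Gamma_half_sub_nat, inv_div]
      field_simp

lemma norm_sphH1_le_abs_sphJ_add_abs_sphY (n : ℕ) (t : ℝ) :
    ‖sphH1 n t‖ ≤ |sphJ n t| + |sphY n t| := by
  simpa [sphH1] using Complex.norm_le_abs_re_add_abs_im (sphH1 n t)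

lemma abs_sphY_le_norm_sphH1 (n : ℕ) (t : ℝ) : |sphY n t| ≤ ‖sphH1 n t‖ := by
  simpa [sphH1] using Complex.abs_im_le_norm (sphH1 n t)

lemma norm_sphH1_le {n : ℕ} (hn : 1 ≤ n) {t : ℝ} (ht : 0 < t) :
    ‖sphH1 n t‖ ≤ (π / 2 * t + 1) * Real.exp (t ^ 2 / 2) * sphYScale n t := by
  have hn' : (1 : ℝ) ≤ n := by exact_mod_cast hn
  have hscale := sphYScale_pos ht n
  have hε : (Real.exp (t ^ 2 / 2) - 1) / (2 * n - 1) ≤ Real.exp (t ^ 2 / 2) - 1 :=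
    div_le_self (sub_nonneg.mpr (Real.one_le_exp (by positivity))) (by linarith)
  have hY : |sphY n t| ≤ sphYScale n t * Real.exp (t ^ 2 / 2) := by
    have h := (abs_le.mp (abs_abs_sphY_sub_sphYScale_le hn ht)).2
    nlinarith [mul_le_mul_of_nonneg_left hε hscale.le]
  have hJ := abs_sphJ_le ht n
  linarith [norm_sphH1_le_abs_sphJ_add_abs_sphY n t]

lemma eventually_sphYScale_div_two_le_norm_sphH1 {t : ℝ} (ht : 0 < t) :
    ∀ᶠ n in atTop, sphYScale n t / 2 ≤ ‖sphH1 n t‖ := by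
  obtain ⟨N, hN⟩ := exists_nat_ge (Real.exp (t ^ 2 / 2))
  filter_upwards [eventually_ge_atTop (max N 1)] with n hn
  have hn1 : 1 ≤ n := le_of_max_le_right hn
  have hnN : Real.exp (t ^ 2 / 2) ≤ n := hN.trans (by exact_mod_cast le_of_max_le_left hn)
  have hn' : (1 : ℝ) ≤ n := by exact_mod_cast hn1
  have hscale := sphYScale_pos ht n
  have hε : (Real.exp (t ^ 2 / 2) - 1) / (2 * n - 1) ≤ 1 / 2 := by
    rw [div_le_iff₀ (by linarith)]; linarith
  have h := (abs_le.mp (abs_abs_sphY_sub_sphYScale_le hn1 ht)).1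
  nlinarith [mul_le_mul_of_nonneg_left hε hscale.le, abs_sphY_le_norm_sphH1 n t]

lemma isBigO_sphH1_div_sphH1 {t s : ℝ} (ht : 0 < t) (hts : t < s) :
    (fun n => sphH1 n s / sphH1 n t) =O[atTop] fun n => (t / s) ^ n := by
  have hs : 0 < s := ht.trans hts
  set A := (π / 2 * s + 1) * Real.exp (s ^ 2 / 2)
  refine Asymptotics.IsBigO.of_bound (2 * A) ?_
  filter_upwards [eventually_ge_atTop 1, eventually_sphYScale_div_two_le_norm_sphH1 ht]
    with n hn hlow
  have hscale := sphYScale_pos ht n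
  rw [norm_div, norm_pow, Real.norm_of_nonneg (by positivity),
    div_le_iff₀ (by linarith)]
  calc ‖sphH1 n s‖ ≤ A * sphYScale n s := norm_sphH1_le hn hs
    _ = A * (t / s) ^ (n + 1) * sphYScale n t := by rw [sphYScale_eq_pow_mul ht hs]; ring
    _ ≤ A * (t / s) ^ n * sphYScale n t := by
        gcongr A * ?_ * _
        exact pow_le_pow_of_le_one (by positivity) (div_le_one_of_le₀ hts.le hs.le) n.le_succ
    _ = 2 * A * (t / s) ^ n * (sphYScale n t / 2) := by ring
    _ ≤ 2 * A * (t / s) ^ n * ‖sphH1 n t‖ := by gcongr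

/-- If `u` is a radiating solution of the Helmholtz equation in `|x| > R'`, with
spherical-harmonic Fourier coefficients `u n m r` on the sphere of radius `r`
satisfying the radiating expansion, then
`û_n^m(R) = (h_n^{(1)}(κR)/h_n^{(1)}(κR')) û_n^m(R')` and
`|û_n^m(R)| ≤ C (R'/R)^n |û_n^m(R')|` with `C` independent of `n` and `m`. -/
theorem radiating_coefficient_decay (κ R' R : ℝ) (hκ : 0 < κ) (hR' : 0 < R')
    (hRR : R' < R) :
    ∃ C > 0, ∀ u : ℕ → ℤ → ℝ → ℂ,
      (∀ (n : ℕ) (m : ℤ) (r : ℝ), R' < r →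
        u n m r = sphH1 n (κ * r) / sphH1 n (κ * R') * u n m R') →
      ∀ (n : ℕ) (m : ℤ),
        u n m R = sphH1 n (κ * R) / sphH1 n (κ * R') * u n m R' ∧
        ‖u n m R‖ ≤ C * (R' / R) ^ n * ‖u n m R'‖ := by
  obtain ⟨C, hC, hbound⟩ := Asymptotics.bound_of_isBigO_nat_atTop
    (isBigO_sphH1_div_sphH1 (mul_pos hκ hR') (mul_lt_mul_of_pos_left hRR hκ))
  simp only [mul_div_mul_left R' R hκ.ne'] at hbound
  refine ⟨C, hC, fun u hu n m => ⟨hu n m R hRR, ?_⟩⟩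
  have hratio := hbound (pow_ne_zero n (div_pos hR' (hR'.trans hRR)).ne')
  rw [norm_pow, Real.norm_of_nonneg (div_pos hR' (hR'.trans hRR)).le] at hratio
  rw [hu n m R hRR, norm_mul]
  gcongr
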